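/- arXiv:1907.03792 — 2 statements merged into one kernel-verified Lean document; each statement's English description precedes it below -/
import Mathlib

section
/- Let V be uniform on {−1,+1} and Z ~ N(0,1) independent of V, and let γ > 0. Then the mutual information I(V; √γ·V + Z) equals γ − E[log cosh(√γ·Z + γ)]. -/
/-!
Write `s = √γ` and `Y = s V + Z`. The law of `Y` is the mixture `½ (N(-s, 1) + N(s, 1))`, whose
density against `N(0, 1)` is `exp (-s² / 2) cosh (s y)`, while `N(v s, 1)` has density
`exp (v s y - s² / 2)` there. Hence the joint law of `(V, Y)` has density
`exp (s v y) / cosh (s y)` with respect to the product of its marginals, and the mutual information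
is `E[s V Y - log cosh (s Y)]`. The branch `V = -1` is the mirror image of the branch `V = 1`
under `y ↦ -y`, and on the branch `V = 1` we have `Y = s + Z`, which gives
`s² - E[log cosh (s Z + s²)]`.
-/

open MeasureTheory ProbabilityTheory Real
open scoped ENNReal NNReal

lemma Real.abs_log_cosh_le_abs (x : ℝ) : |log (cosh x)| ≤ |x| := by
  rw [abs_of_nonneg (log_nonneg (one_le_cosh x)), log_le_iff_le_exp (cosh_pos x), cosh_eq]
  linarith [exp_le_exp.mpr (le_abs_self x), exp_le_exp.mpr (neg_le_abs x)]

namespace MeasureTheory.Measure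

variable {α β γ : Type*} [MeasurableSpace α] [MeasurableSpace β] [MeasurableSpace γ]

lemma map_dirac_prod (a : α) (ν : Measure β) [SFinite ν]
    {f : α × β → γ} (hf : Measurable f) :
    ((dirac a).prod ν).map f = ν.map (fun b => f (a, b)) := by
  rw [dirac_prod, map_map hf measurable_prodMk_left]
  rfl

lemma withDensity_map_prodMk (a : α) (ν : Measure β) {f : α × β → ℝ≥0∞}
    (hf : Measurable f) :
    (ν.map (Prod.mk a)).withDensity f = (ν.withDensity (fun b => f (a, b))).map (Prod.mk a) := by
  ext s hs
  rw [withDensity_apply _ hs, setLIntegral_map hs hf measurable_prodMk_left,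
    map_apply measurable_prodMk_left hs, withDensity_apply _ (measurable_prodMk_left hs)]

end MeasureTheory.Measure

namespace ProbabilityTheory

lemma gaussianReal_eq_withDensity_exp (μ : ℝ) {v : ℝ≥0} (hv : v ≠ 0) :
    gaussianReal μ v
      = (gaussianReal 0 v).withDensity
          (fun x => ENNReal.ofReal (exp ((μ * x - μ ^ 2 / 2) / v))) := by
  rw [gaussianReal_of_var_ne_zero _ hv, gaussianReal_of_var_ne_zero _ hv,
    ← withDensity_mul _ (measurable_gaussianPDF _ _) (by fun_prop)]
  congr 1
  ext x
  rw [Pi.mul_apply, gaussianPDF, gaussianPDF, ← ENNReal.ofReal_mul (gaussianPDFReal_nonneg _ _ _),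
    gaussianPDFReal, gaussianPDFReal, mul_assoc _ (rexp _), ← exp_add]
  congr 3
  have : (v : ℝ) ≠ 0 := by exact_mod_cast hv
  field_simp
  ring

variable {E : Type*} [NormedAddCommGroup E] [NormedSpace ℝ E]

lemma integral_gaussianReal_eq_integral_add (f : ℝ → E) (μ : ℝ) (v : ℝ≥0) :
    ∫ y, f y ∂gaussianReal μ v = ∫ z, f (z + μ) ∂gaussianReal 0 v := by
  have h : (gaussianReal 0 v).map (MeasurableEquiv.addRight μ) = gaussianReal μ v := by
    rw [MeasurableEquiv.coe_addRight, gaussianReal_map_add_const, zero_add]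
  rw [← h, integral_map_equiv]
  rfl

lemma integral_comp_neg_gaussianReal (f : ℝ → E) (μ : ℝ) (v : ℝ≥0) :
    ∫ y, f (-y) ∂gaussianReal μ v = ∫ y, f y ∂gaussianReal (-μ) v := by
  rw [← gaussianReal_map_neg]
  exact (integral_map_equiv (MeasurableEquiv.neg ℝ) f).symm

lemma integrable_log_cosh_mul (s μ : ℝ) (v : ℝ≥0) :
    Integrable (fun y => log (cosh (s * y))) (gaussianReal μ v) := by
  refine (IsGaussian.integrable_id.abs.const_mul |s|).mono'
    (continuous_cosh.comp (continuous_const_mul s)).measurable.log.aestronglyMeasurable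
    (ae_of_all _ fun y => ?_)
  simpa [abs_mul] using abs_log_cosh_le_abs (s * y)

end ProbabilityTheory

namespace BinaryGaussianChannel

noncomputable def inputLaw : Measure ℝ :=
  (1 / 2 : ℝ≥0∞) • (Measure.dirac (-1 : ℝ) + Measure.dirac (1 : ℝ))

noncomputable def outputLaw (s : ℝ) : Measure ℝ :=
  (1 / 2 : ℝ≥0∞) • (gaussianReal (-s) 1 + gaussianReal s 1)

noncomputable def jointLaw (s : ℝ) : Measure (ℝ × ℝ) :=
  (1 / 2 : ℝ≥0∞) •
    ((gaussianReal (-s) 1).map (Prod.mk (-1)) + (gaussianReal s 1).map (Prod.mk 1))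

noncomputable def density (s : ℝ) (p : ℝ × ℝ) : ℝ≥0∞ :=
  ENNReal.ofReal (exp (s * p.1 * p.2) / cosh (s * p.2))

instance : IsProbabilityMeasure inputLaw :=
  ⟨by simp [inputLaw, ENNReal.inv_two_add_inv_two]⟩

instance (s : ℝ) : IsProbabilityMeasure (outputLaw s) :=
  ⟨by simp [outputLaw, ENNReal.inv_two_add_inv_two]⟩

variable (s : ℝ)

lemma measurable_density : Measurable (density s) := by
  unfold density
  fun_prop

lemma map_gaussianReal_prodMk_const_add (v : ℝ) :
    (gaussianReal 0 1).map (fun z => (v, s * v + z))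
      = (gaussianReal (s * v) 1).map (Prod.mk v) := by
  rw [← zero_add (s * v), ← gaussianReal_map_const_add,
    Measure.map_map measurable_prodMk_left (by fun_prop), zero_add]
  rfl

lemma map_inputLaw_prod_gaussianReal :
    (inputLaw.prod (gaussianReal 0 1)).map (fun p => (p.1, s * p.1 + p.2)) = jointLaw s := by
  have hg : Measurable fun p : ℝ × ℝ => (p.1, s * p.1 + p.2) := by fun_prop
  rw [inputLaw, Measure.prod_smul_left, Measure.add_prod, Measure.map_smul, Measure.map_add _ _ hg,
    Measure.map_dirac_prod _ _ hg, Measure.map_dirac_prod _ _ hg,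
    map_gaussianReal_prodMk_const_add, map_gaussianReal_prodMk_const_add, mul_neg_one, mul_one,
    jointLaw]

lemma jointLaw_map_snd : (jointLaw s).map Prod.snd = outputLaw s := by
  rw [jointLaw, Measure.map_smul, Measure.map_add _ _ measurable_snd,
    Measure.map_map measurable_snd measurable_prodMk_left,
    Measure.map_map measurable_snd measurable_prodMk_left]
  exact congrArg _ (congrArg₂ _ Measure.map_id Measure.map_id)

lemma outputLaw_eq_withDensity :
    outputLaw s
      = (gaussianReal 0 1).withDensity
          (fun y => ENNReal.ofReal (exp (-s ^ 2 / 2) * cosh (s * y))) := by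
  rw [outputLaw, gaussianReal_eq_withDensity_exp (-s) one_ne_zero,
    gaussianReal_eq_withDensity_exp s one_ne_zero, ← withDensity_add_left (by fun_prop),
    ← withDensity_smul _ (by fun_prop)]
  congr 1
  ext y
  rw [Pi.smul_apply, Pi.add_apply, ← ENNReal.ofReal_add (exp_nonneg _) (exp_nonneg _),
    smul_eq_mul, ← ENNReal.ofReal_ofNat 2, ← ENNReal.ofReal_one,
    ← ENNReal.ofReal_div_of_pos two_pos, ← ENNReal.ofReal_mul (by norm_num), cosh_eq]
  congr 1
  simp only [NNReal.coe_one, div_one, sub_eq_add_neg, exp_add]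
  ring_nf

lemma outputLaw_withDensity_density {v : ℝ} (hv : v ^ 2 = 1) :
    (outputLaw s).withDensity (fun y => density s (v, y)) = gaussianReal (v * s) 1 := by
  rw [outputLaw_eq_withDensity, ← withDensity_mul _ (by fun_prop) (by unfold density; fun_prop),
    gaussianReal_eq_withDensity_exp (v * s) one_ne_zero]
  congr 1
  ext y
  rw [Pi.mul_apply, density, ← ENNReal.ofReal_mul (by positivity)]
  congr 1
  calc exp (-s ^ 2 / 2) * cosh (s * y) * (exp (s * v * y) / cosh (s * y))
      = exp (-s ^ 2 / 2 + s * v * y) := by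
        rw [exp_add]; field_simp [(cosh_pos (s * y)).ne']
    _ = _ := by
        congr 1; push_cast; linear_combination (s ^ 2 / 2) * hv

lemma inputLaw_prod_outputLaw_withDensity :
    (inputLaw.prod (outputLaw s)).withDensity (density s) = jointLaw s := by
  rw [inputLaw, Measure.prod_smul_left, Measure.add_prod, Measure.dirac_prod, Measure.dirac_prod,
    withDensity_smul_measure, withDensity_add_measure,
    Measure.withDensity_map_prodMk _ _ (measurable_density s),
    Measure.withDensity_map_prodMk _ _ (measurable_density s),
    outputLaw_withDensity_density s (by norm_num), outputLaw_withDensity_density s (by norm_num),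
    neg_one_mul, one_mul, jointLaw]

lemma rnDeriv_jointLaw_ae_eq :
    (jointLaw s).rnDeriv (inputLaw.prod (outputLaw s)) =ᵐ[jointLaw s] density s := by
  have h := Measure.rnDeriv_withDensity (inputLaw.prod (outputLaw s)) (measurable_density s)
  rw [inputLaw_prod_outputLaw_withDensity] at h
  refine h.filter_mono (Measure.AbsolutelyContinuous.ae_le ?_)
  rw [← inputLaw_prod_outputLaw_withDensity]
  exact withDensity_absolutelyContinuous _ _

lemma log_toReal_density (p : ℝ × ℝ) :
    log (density s p).toReal = s * p.1 * p.2 - log (cosh (s * p.2)) := by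
  have hc := cosh_pos (s * p.2)
  rw [density, ENNReal.toReal_ofReal (by positivity), log_div (exp_ne_zero _) hc.ne', log_exp]

lemma integral_jointLaw {F : ℝ × ℝ → ℝ} (hF : Measurable F)
    (hneg : Integrable (fun y => F (-1, y)) (gaussianReal (-s) 1))
    (hpos : Integrable (fun y => F (1, y)) (gaussianReal s 1)) :
    ∫ p, F p ∂jointLaw s
      = (∫ y, F (-1, y) ∂gaussianReal (-s) 1 + ∫ y, F (1, y) ∂gaussianReal s 1) / 2 := by
  have hmap {μ : Measure ℝ} {v : ℝ} (h : Integrable (fun y => F (v, y)) μ) :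
      Integrable F (μ.map (Prod.mk v)) :=
    (integrable_map_measure hF.aestronglyMeasurable measurable_prodMk_left.aemeasurable).mpr h
  rw [jointLaw, integral_smul_measure, integral_add_measure (hmap hneg) (hmap hpos),
    integral_map measurable_prodMk_left.aemeasurable hF.aestronglyMeasurable,
    integral_map measurable_prodMk_left.aemeasurable hF.aestronglyMeasurable]
  norm_num
  ring

lemma integral_log_rnDeriv_jointLaw :
    ∫ p, log ((jointLaw s).rnDeriv (inputLaw.prod (outputLaw s)) p).toReal ∂jointLaw s
      = s ^ 2 - ∫ z, log (cosh (s * z + s ^ 2)) ∂gaussianReal 0 1 := by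
  have hid (μ : ℝ) : Integrable (fun y => y) (gaussianReal μ 1) := IsGaussian.integrable_id
  have hF (v μ : ℝ) : Integrable (fun y => s * v * y - log (cosh (s * y))) (gaussianReal μ 1) :=
    ((hid μ).const_mul (s * v)).sub (integrable_log_cosh_mul s μ 1)
  have hsymm : ∫ y, (s * (-1) * y - log (cosh (s * y))) ∂gaussianReal (-s) 1
      = ∫ y, (s * 1 * y - log (cosh (s * y))) ∂gaussianReal s 1 := by
    rw [← neg_neg s, ← integral_comp_neg_gaussianReal, neg_neg]
    simp only [mul_neg, mul_one, neg_mul, neg_neg, cosh_neg]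
  have hmean : ∫ y, (s * 1 * y - log (cosh (s * y))) ∂gaussianReal s 1
      = s ^ 2 - ∫ z, log (cosh (s * z + s ^ 2)) ∂gaussianReal 0 1 := by
    rw [integral_sub ((hid s).const_mul _) (integrable_log_cosh_mul s s 1), integral_const_mul,
      integral_id_gaussianReal, integral_gaussianReal_eq_integral_add]
    ring_nf
  rw [integral_congr_ae ((rnDeriv_jointLaw_ae_eq s).mono fun p hp => by
      rw [hp, log_toReal_density]),
    integral_jointLaw s (by fun_prop) (hF (-1) (-s)) (hF 1 s), hsymm, hmean]
  ring

end BinaryGaussianChannel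

open BinaryGaussianChannel

/-- For `V` uniform on `{-1,+1}`, `Z` standard Gaussian independent of `V`,
and `γ > 0`, the mutual information `I(V; √γ·V + Z)` equals `γ - E[log cosh(√γ·Z + γ)]`. -/
theorem stmt2
    {Ω : Type*} [MeasureSpace Ω] [IsProbabilityMeasure (ℙ : Measure Ω)]
    (V Z : Ω → ℝ) (hV : Measurable V) (hZ : Measurable Z)
    (hVlaw : Measure.map V ℙ
      = (1 / 2 : ℝ≥0∞) • (Measure.dirac (-1 : ℝ) + Measure.dirac (1 : ℝ)))
    (hZlaw : Measure.map Z ℙ = gaussianReal 0 1)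
    (hind : IndepFun V Z ℙ)
    (γ : ℝ) (hγ : 0 < γ) :
    ∫ p, Real.log
        ((Measure.rnDeriv
            (Measure.map (fun ω => (V ω, Real.sqrt γ * V ω + Z ω)) ℙ)
            ((Measure.map V ℙ).prod
              (Measure.map (fun ω => Real.sqrt γ * V ω + Z ω) ℙ))) p).toReal
        ∂(Measure.map (fun ω => (V ω, Real.sqrt γ * V ω + Z ω)) ℙ)
      = γ - ∫ ω, Real.log (Real.cosh (Real.sqrt γ * Z ω + γ)) ∂ℙ := by
  set s := Real.sqrt γ
  have hs : s ^ 2 = γ := Real.sq_sqrt hγ.le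
  have hVZ : Measure.map (fun ω => (V ω, Z ω)) ℙ = inputLaw.prod (gaussianReal 0 1) := by
    rw [inputLaw, ← hVlaw, ← hZlaw]
    exact (indepFun_iff_map_prod_eq_prod_map_map hV.aemeasurable hZ.aemeasurable).mp hind
  have hjoint : Measure.map (fun ω => (V ω, s * V ω + Z ω)) ℙ = jointLaw s := by
    rw [← map_inputLaw_prod_gaussianReal, ← hVZ, Measure.map_map (by fun_prop) (by fun_prop)]
    rfl
  have houtput : Measure.map (fun ω => s * V ω + Z ω) ℙ = outputLaw s := by
    rw [← jointLaw_map_snd, ← hjoint, Measure.map_map measurable_snd (by fun_prop)]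
    rfl
  rw [hjoint, hVlaw, ← inputLaw, houtput, integral_log_rnDeriv_jointLaw, hs, ← hZlaw,
    integral_map hZ.aemeasurable (Measurable.aestronglyMeasurable (by fun_prop))]
end

section
/- For Z standard Gaussian and γ > 0, one has E[tanh(√γ·Z + γ)] = E[tanh²(√γ·Z + γ)]. -/
open MeasureTheory ProbabilityTheory Real

/-!
Write `Y = √γ Z + γ`. The reflection `z ↦ -z - 2√γ` preserves Lebesgue measure, sends `Y`
to `-Y` and multiplies the standard Gaussian density by `exp (-2Y)`. Hence `E[g Y] = 0` for
every `g` with `exp (-2u) g (-u) = -g u`, and `g = tanh - tanh²` is such a function.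
-/

lemma Real.continuous_tanh : Continuous tanh := by
  simp_rw [funext tanh_eq_sinh_div_cosh]
  exact continuous_sinh.div continuous_cosh fun x => (cosh_pos x).ne'

lemma gaussianPDFReal_zero_one_neg_add_two_mul (a z : ℝ) :
    gaussianPDFReal 0 1 (-(z + 2 * a))
      = gaussianPDFReal 0 1 z * exp (-(2 * (a * z + a ^ 2))) := by
  simp only [gaussianPDFReal, NNReal.coe_one, mul_one, sub_zero, mul_assoc, ← exp_add]
  ring_nf

lemma integral_gaussianReal_comp_sqrt_mul_add_eq_integral_exp_smul_neg {E : Type*}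
    [NormedAddCommGroup E] [NormedSpace ℝ E] {γ : ℝ} (hγ : 0 ≤ γ) (g : ℝ → E) :
    ∫ z, g (√γ * z + γ) ∂(gaussianReal 0 1)
      = ∫ z, exp (-(2 * (√γ * z + γ))) • g (-(√γ * z + γ)) ∂(gaussianReal 0 1) := by
  have hsq : √γ ^ 2 = γ := sq_sqrt hγ
  rw [integral_gaussianReal_eq_integral_smul one_ne_zero,
    integral_gaussianReal_eq_integral_smul one_ne_zero,
    ← integral_neg_eq_self, ← integral_add_right_eq_self _ (2 * √γ)]
  congr 1 with z
  rw [gaussianPDFReal_zero_one_neg_add_two_mul, hsq, mul_smul]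
  congr 3
  linear_combination (-2) * hsq

lemma integral_gaussianReal_comp_sqrt_mul_add_eq_zero {E : Type*} [NormedAddCommGroup E]
    [NormedSpace ℝ E] {γ : ℝ} (hγ : 0 ≤ γ) {g : ℝ → E}
    (hg : ∀ u, exp (-(2 * u)) • g (-u) = -g u) :
    ∫ z, g (√γ * z + γ) ∂(gaussianReal 0 1) = 0 := by
  have h := integral_gaussianReal_comp_sqrt_mul_add_eq_integral_exp_smul_neg hγ g
  simp only [hg, integral_neg] at h
  have h2 : (2 : ℝ) • ∫ z, g (√γ * z + γ) ∂(gaussianReal 0 1) = 0 := by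
    rw [two_smul]
    nth_rw 1 [h]
    exact neg_add_cancel _
  exact (smul_eq_zero.mp h2).resolve_left two_ne_zero

lemma exp_neg_two_mul_mul_tanh_sub_tanh_sq_neg (u : ℝ) :
    exp (-(2 * u)) * (tanh (-u) - tanh (-u) ^ 2) = -(tanh u - tanh u ^ 2) := by
  have hc : exp u + exp (-u) ≠ 0 := by positivity
  rw [tanh_neg, tanh_eq, show -(2 * u) = -u + -u by ring, exp_add]
  field_simp
  rw [show exp u = (exp (-u))⁻¹ by rw [exp_neg, inv_inv]]
  field_simp
  ring

/-- For `Z ~ N(0,1)` and `γ > 0`,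
`E[tanh(√γ·Z + γ)] = E[tanh²(√γ·Z + γ)]` (Nishimori identity). -/
theorem stmt5 (γ : ℝ) (hγ : 0 < γ) :
    ∫ z, Real.tanh (Real.sqrt γ * z + γ) ∂(gaussianReal 0 1)
      = ∫ z, Real.tanh (Real.sqrt γ * z + γ) ^ 2 ∂(gaussianReal 0 1) := by
  have hY : Continuous fun z => tanh (√γ * z + γ) := continuous_tanh.comp (by fun_prop)
  have hint : Integrable (fun z => tanh (√γ * z + γ)) (gaussianReal 0 1) :=
    .of_bound hY.aestronglyMeasurable 1 (ae_of_all _ fun z => (abs_tanh_lt_one _).le)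
  have hint_sq : Integrable (fun z => tanh (√γ * z + γ) ^ 2) (gaussianReal 0 1) :=
    .of_bound (hY.pow 2).aestronglyMeasurable 1
      (ae_of_all _ fun z => by simpa using (tanh_sq_lt_one _).le)
  rw [← sub_eq_zero, ← integral_sub hint hint_sq]
  exact integral_gaussianReal_comp_sqrt_mul_add_eq_zero hγ.le (g := fun u => tanh u - tanh u ^ 2)
    exp_neg_two_mul_mul_tanh_sub_tanh_sq_neg
end
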